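/- Let (F_1, F_2) be a Nash equilibrium of the single-item all-pay auction with parameters (B_1, B_2, v_1, v_2). If inf Supp(F_1) < sup Supp(F_1) and inf Supp(F_2) < sup Supp(F_2), then inf Supp(F_1) = inf Supp(F_2) = 0. -/

import Mathlib

open MeasureTheory Set

noncomputable section

/-- `L = min {B₁, B₂, v₁, v₂}` for the single-item auction. -/
def Lval (B v : Fin 2 → ℝ) : ℝ := min (min (B 0) (B 1)) (min (v 0) (v 1))

/-- Probability that player `i` wins the single item when bidding `xi` while the
opponent bids `xo`: the strictly higher bid wins; on a tie at
`min {B₁, B₂, v₁, v₂}` the player with the strictly larger `min {Bᵢ, vᵢ}` wins,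
and all other ties are resolved by a fair coin. -/
def winProb (B v : Fin 2 → ℝ) (i : Fin 2) (xi xo : ℝ) : ℝ :=
  if xo < xi then 1
  else if xi < xo then 0
  else if xi = Lval B v ∧ min (B (1 - i)) (v (1 - i)) < min (B i) (v i) then 1
  else if xi = Lval B v ∧ min (B i) (v i) < min (B (1 - i)) (v (1 - i)) then 0
  else 1 / 2

/-- Expected utility of player `i` from the pure bids `xi` (own) and `xo` (opponent):
he pays his bid in any case and receives `v i` with his winning probability. -/
def payoff (B v : Fin 2 → ℝ) (i : Fin 2) (xi xo : ℝ) : ℝ :=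
  winProb B v i xi xo * v i - xi

/-- A mixed strategy of a player with budget `Bi`: a probability measure on `[0, Bi]`. -/
def IsStrategy (Bi : ℝ) (μ : Measure ℝ) : Prop :=
  IsProbabilityMeasure μ ∧ μ (Icc 0 Bi) = 1

/-- Expected utility of player `i` when he plays `μ` and the opponent plays `ν`. -/
def expUtil (B v : Fin 2 → ℝ) (i : Fin 2) (μ ν : Measure ℝ) : ℝ :=
  ∫ xi, (∫ xo, payoff B v i xi xo ∂ν) ∂μ

/-- `(F 0, F 1)` is a (mixed) Nash equilibrium of the single-item all-pay auction. -/
def IsNash (B v : Fin 2 → ℝ) (F : Fin 2 → Measure ℝ) : Prop :=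
  (∀ i, IsStrategy (B i) (F i)) ∧
  ∀ i, ∀ μ, IsStrategy (B i) μ →
    expUtil B v i μ (F (1 - i)) ≤ expUtil B v i (F i) (F (1 - i))

/-- The (topological) support of a mixed strategy. -/
def supp (μ : Measure ℝ) : Set ℝ := {x | ∀ U ∈ nhds x, μ U ≠ 0}

/-!
Let `t > 0` be the lowest bid of a player whose equilibrium strategy `μ` is not pure, and let `ν`
be the opponent's strategy. An opponent bid `x ∈ (0, t]` with `μ (Iic x) = 0` loses for sure at
a positive cost, so `ν` vanishes on `(0, t)` and has an atom at `t` only if `μ` has one. If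
`ν` has no atom at `t`, bids just above `t` win hardly more than the bid `t / 2` but cost about
`t / 2` more, so `μ` would vanish near `t`. If both have atoms at `t`, either the tie rule lets
the opponent lose the tie for sure, or `μ`'s player wins it with probability at most `1 / 2` and
gains by raising his bid slightly, which `t < sSup (supp μ) ≤ B` allows.
-/

open Filter Topology

section Support

variable {μ : Measure ℝ} {b t : ℝ}

lemma supp_eq_support (μ : Measure ℝ) : supp μ = μ.support := by
  ext x
  simp [supp, Measure.mem_support_iff_forall, pos_iff_ne_zero]

lemma nonempty_supp_of_sInf_lt_sSup (h : sInf (supp μ) < sSup (supp μ)) : (supp μ).Nonempty := by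
  by_contra hne
  rw [not_nonempty_iff_eq_empty.1 hne, Real.sInf_empty, Real.sSup_empty] at h
  exact h.false

lemma measure_Iio_sInf_supp (hbdd : BddBelow (supp μ)) : μ (Iio (sInf (supp μ))) = 0 := by
  have hsub : Iio (sInf (supp μ)) ⊆ (supp μ)ᶜ := fun x hx hxμ ↦ (csInf_le hbdd hxμ).not_gt hx
  exact measure_mono_null hsub (by rw [supp_eq_support]; exact Measure.measure_compl_support)

lemma measure_ne_zero_of_mem_nhdsGE (ht : t ∈ supp μ) (hlow : μ (Iio t) = 0) {s : Set ℝ}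
    (hs : s ∈ 𝓝[≥] t) : μ s ≠ 0 := by
  refine fun hs0 ↦ ht (s ∪ Iio t) ?_ (measure_union_null hs0 hlow)
  rw [← nhdsLT_sup_nhdsGE]
  exact ⟨mem_of_superset self_mem_nhdsWithin subset_union_right,
    mem_of_superset hs subset_union_left⟩

lemma IsStrategy.nonneg (h : IsStrategy b μ) : 0 ≤ b := by
  by_contra hb
  have := h.2
  rw [Icc_eq_empty hb, measure_empty] at this
  exact zero_ne_one this

lemma IsStrategy.ae_mem (h : IsStrategy b μ) : ∀ᵐ x ∂μ, x ∈ Icc 0 b := by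
  have := h.1
  exact (ae_iff_measure_eq measurableSet_Icc.nullMeasurableSet).2 (h.2.trans measure_univ.symm)

lemma IsStrategy.supp_subset (h : IsStrategy b μ) : supp μ ⊆ Icc 0 b :=
  supp_eq_support μ ▸ Measure.support_subset_of_isClosed isClosed_Icc h.ae_mem

lemma IsStrategy.sInf_supp_mem (h : IsStrategy b μ) (hne : (supp μ).Nonempty) :
    sInf (supp μ) ∈ supp μ :=
  (supp_eq_support μ ▸ Measure.isClosed_support).csInf_mem hne
    ⟨0, fun _ hx ↦ (h.supp_subset hx).1⟩

end Support

variable {B v : Fin 2 → ℝ} {i : Fin 2}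

lemma winProb_of_lt {x y : ℝ} (h : y < x) : winProb B v i x y = 1 := by
  simp [winProb, h]

lemma winProb_of_gt {x y : ℝ} (h : x < y) : winProb B v i x y = 0 := by
  simp [winProb, h, h.not_gt]

lemma winProb_nonneg (x y : ℝ) : 0 ≤ winProb B v i x y := by
  unfold winProb; split_ifs <;> norm_num

lemma winProb_le_one (x y : ℝ) : winProb B v i x y ≤ 1 := by
  unfold winProb; split_ifs <;> norm_num

lemma winProb_self_le_half_or (x : ℝ) :
    winProb B v i x x ≤ 1 / 2 ∨ winProb B v (1 - i) x x = 0 := by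
  simp only [winProb, lt_irrefl, if_false, sub_sub_cancel]
  split_ifs with h₁ h₂ <;> norm_num
  exact h₁.2.asymm h₂.2

lemma measurable_payoff : Measurable fun p : ℝ × ℝ ↦ payoff B v i p.1 p.2 := by
  have hfst : ∀ c : ℝ, MeasurableSet {p : ℝ × ℝ | p.1 = c} := fun c ↦
    measurableSet_eq_fun measurable_fst measurable_const
  refine (Measurable.mul_const ?_ _).sub measurable_fst
  refine Measurable.ite (measurableSet_lt measurable_snd measurable_fst) measurable_const
    (Measurable.ite (measurableSet_lt measurable_fst measurable_snd) measurable_const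
    (Measurable.ite ?_ measurable_const (Measurable.ite ?_ measurable_const measurable_const)))
  · exact (hfst _).inter (MeasurableSet.const _)
  · exact (hfst _).inter (MeasurableSet.const _)

lemma winProb_eq_indicator (x : ℝ) : winProb B v i x =
    (Iio x).indicator 1 + ({x} : Set ℝ).indicator fun _ ↦ winProb B v i x x := by
  ext y
  rcases lt_trichotomy y x with h | rfl | h
  · simp [winProb_of_lt h, h, h.ne]
  · simp
  · simp [winProb_of_gt h, h.not_gt, h.ne']

def pureUtil (B v : Fin 2 → ℝ) (i : Fin 2) (ν : Measure ℝ) (x : ℝ) : ℝ :=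
  ∫ y, payoff B v i x y ∂ν

section PureUtil

variable {ν : Measure ℝ} [IsProbabilityMeasure ν]

lemma integral_winProb (x : ℝ) :
    ∫ y, winProb B v i x y ∂ν = ν.real (Iio x) + winProb B v i x x * ν.real {x} := by
  conv_lhs => rw [winProb_eq_indicator]
  rw [integral_add' ((integrable_const 1).indicator measurableSet_Iio)
    ((integrable_const _).indicator (measurableSet_singleton x)),
    integral_indicator_one measurableSet_Iio,
    integral_indicator_const _ (measurableSet_singleton x), smul_eq_mul, mul_comm]

lemma pureUtil_eq (x : ℝ) :
    pureUtil B v i ν x = (ν.real (Iio x) + winProb B v i x x * ν.real {x}) * v i - x := by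
  have hint : Integrable (winProb B v i x) ν := by
    rw [winProb_eq_indicator]
    exact ((integrable_const 1).indicator measurableSet_Iio).add
      ((integrable_const _).indicator (measurableSet_singleton x))
  unfold pureUtil payoff
  rw [integral_sub (hint.mul_const _) (integrable_const x), integral_mul_const,
    integral_winProb, integral_const, probReal_univ, one_smul]

lemma stronglyMeasurable_pureUtil : StronglyMeasurable (pureUtil B v i ν) :=
  measurable_payoff.stronglyMeasurable.integral_prod_right'

lemma le_pureUtil (hv : 0 ≤ v i) (x : ℝ) : ν.real (Iio x) * v i - x ≤ pureUtil B v i ν x := by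
  rw [pureUtil_eq]
  have := mul_nonneg (winProb_nonneg (B := B) (v := v) (i := i) x x)
    (measureReal_nonneg (μ := ν) (s := {x}))
  nlinarith

lemma pureUtil_le (hv : 0 ≤ v i) (x : ℝ) : pureUtil B v i ν x ≤ ν.real (Iic x) * v i - x := by
  rw [pureUtil_eq, ← Iio_union_right, measureReal_union (by simp) (measurableSet_singleton x)]
  have := mul_le_of_le_one_left (measureReal_nonneg (μ := ν) (s := {x}))
    (winProb_le_one (B := B) (v := v) (i := i) x x)
  nlinarith

lemma pureUtil_le_of_winProb_le_half (hv : 0 ≤ v i) {x : ℝ} (hw : winProb B v i x x ≤ 1 / 2) :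
    pureUtil B v i ν x ≤ (ν.real (Iio x) + ν.real {x} / 2) * v i - x := by
  rw [pureUtil_eq]
  have := mul_le_mul_of_nonneg_right hw (measureReal_nonneg (μ := ν) (s := {x}))
  nlinarith

lemma pureUtil_neg_of_measure_Iic_eq_zero (hv : 0 ≤ v i) {x : ℝ} (hx : 0 < x)
    (h : ν (Iic x) = 0) : pureUtil B v i ν x < 0 := by
  have := pureUtil_le (B := B) (ν := ν) hv x
  rw [measureReal_def, h, ENNReal.toReal_zero, zero_mul] at this
  linarith

lemma IsStrategy.integrable_pureUtil {μ : Measure ℝ} {b : ℝ} (hμ : IsStrategy b μ)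
    (hv : 0 ≤ v i) : Integrable (pureUtil B v i ν) μ := by
  have := hμ.1
  refine .of_bound stronglyMeasurable_pureUtil.aestronglyMeasurable (v i + b) ?_
  filter_upwards [hμ.ae_mem] with x hx
  have := le_pureUtil (B := B) (ν := ν) hv x
  have := pureUtil_le (B := B) (ν := ν) hv x
  have := mul_le_of_le_one_left hv (measureReal_le_one (μ := ν) (s := Iic x))
  rw [Real.norm_eq_abs, abs_le]
  constructor <;> nlinarith [hx.1, hx.2, mul_nonneg (measureReal_nonneg (μ := ν) (s := Iio x)) hv]

end PureUtil


def IsBestResponse (B v : Fin 2 → ℝ) (i : Fin 2) (μ ν : Measure ℝ) : Prop :=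
  IsStrategy (B i) μ ∧ ∀ μ', IsStrategy (B i) μ' → expUtil B v i μ' ν ≤ expUtil B v i μ ν

lemma IsNash.isBestResponse {F : Fin 2 → Measure ℝ} (hN : IsNash B v F) (i : Fin 2) :
    IsBestResponse B v i (F i) (F (1 - i)) :=
  ⟨hN.1 i, hN.2 i⟩

namespace IsBestResponse

variable {μ ν : Measure ℝ} (hμ : IsBestResponse B v i μ ν)
include hμ

lemma pureUtil_le_expUtil {x : ℝ} (hx : x ∈ Icc 0 (B i)) :
    pureUtil B v i ν x ≤ expUtil B v i μ ν := by
  have hδ : IsStrategy (B i) (Measure.dirac x) :=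
    ⟨inferInstance, by rw [Measure.dirac_apply_of_mem hx]⟩
  simpa [expUtil, pureUtil] using hμ.2 _ hδ

variable [IsProbabilityMeasure ν]

lemma expUtil_nonneg (hv : 0 ≤ v i) : 0 ≤ expUtil B v i μ ν := by
  have := hμ.pureUtil_le_expUtil ⟨le_rfl, hμ.1.nonneg⟩
  have := le_pureUtil (B := B) (ν := ν) hv 0
  linarith [mul_nonneg (measureReal_nonneg (μ := ν) (s := Iio 0)) hv]

lemma measure_eq_zero_of_pureUtil_lt (hv : 0 ≤ v i) {s : Set ℝ}
    (hs : ∀ x ∈ s, pureUtil B v i ν x < expUtil B v i μ ν) : μ s = 0 := by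
  have := hμ.1.1
  set c := expUtil B v i μ ν
  have hint : Integrable (pureUtil B v i ν) μ := hμ.1.integrable_pureUtil hv
  have hgap : (fun _ ↦ c) - pureUtil B v i ν =ᵐ[μ] 0 := by
    rw [← integral_eq_zero_iff_of_nonneg_ae _ ((integrable_const c).sub hint)]
    · rw [integral_sub' (integrable_const c) hint, integral_const, probReal_univ, one_smul]
      exact sub_self c
    · filter_upwards [hμ.1.ae_mem] with x hx
      exact sub_nonneg.2 (hμ.pureUtil_le_expUtil hx)
  exact measure_mono_null (fun x hx hx0 ↦ (sub_pos.2 (hs x hx)).ne' hx0) hgap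

lemma measure_eq_zero_of_pureUtil_neg (hv : 0 ≤ v i) {s : Set ℝ}
    (hs : ∀ x ∈ s, pureUtil B v i ν x < 0) : μ s = 0 :=
  hμ.measure_eq_zero_of_pureUtil_lt hv fun x hx ↦ (hs x hx).trans_le (hμ.expUtil_nonneg hv)

lemma notMem_supp_of_measure_Ioo_eq_zero (hv : 0 < v i) {t : ℝ} (ht : 0 < t)
    (hlow : μ (Iio t) = 0) (hgap : ν (Ioo 0 t) = 0) (hνt : ν {t} = 0) : t ∉ supp μ := by
  intro htμ
  have htB : t ≤ B i := (hμ.1.supp_subset htμ).2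
  have hval : ν.real (Iio t) * v i - t / 2 ≤ expUtil B v i μ ν := by
    have hsub : Iio t ⊆ Iio (t / 2) ∪ Ioo 0 t := fun x hx ↦
      (lt_or_ge x (t / 2)).imp id fun h ↦ ⟨by linarith, hx⟩
    have hmass : ν.real (Iio t) ≤ ν.real (Iio (t / 2)) := by
      calc ν.real (Iio t) ≤ ν.real (Iio (t / 2) ∪ Ioo 0 t) := measureReal_mono hsub
        _ ≤ ν.real (Iio (t / 2)) + ν.real (Ioo 0 t) := measureReal_union_le _ _
        _ = ν.real (Iio (t / 2)) := by rw [(measureReal_eq_zero_iff).2 hgap, add_zero]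
    have := hμ.pureUtil_le_expUtil (x := t / 2) ⟨by linarith, by linarith⟩
    have := le_pureUtil (B := B) (ν := ν) hv.le (t / 2)
    nlinarith
  have hIic : ν.real (Iic t) = ν.real (Iio t) := by
    rw [← Iio_union_right, measureReal_union (by simp) (measurableSet_singleton t),
      (measureReal_eq_zero_iff).2 hνt, add_zero]
  have hnear : ∀ᶠ x in 𝓝[≥] t, ν.real (Iic x) * v i < ν.real (Iio t) * v i + t / 2 := by
    have hlt : ProbabilityTheory.cdf ν t * v i < ν.real (Iio t) * v i + t / 2 := by
      rw [ProbabilityTheory.cdf_eq_real, hIic]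
      linarith
    filter_upwards [(((ProbabilityTheory.cdf ν).right_continuous t).mul_const (v i)).eventually
      (eventually_lt_nhds hlt)] with x hx
    rwa [ProbabilityTheory.cdf_eq_real] at hx
  refine measure_ne_zero_of_mem_nhdsGE htμ hlow ?_
    (hμ.measure_eq_zero_of_pureUtil_lt hv.le (s := {x | pureUtil B v i ν x < expUtil B v i μ ν})
      fun _ hx ↦ hx)
  filter_upwards [hnear, self_mem_nhdsWithin] with x hx hxt
  have := pureUtil_le (B := B) (ν := ν) hv.le x
  exact lt_of_le_of_lt this (by linarith [mem_Ici.1 hxt])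

lemma measure_singleton_eq_zero_of_winProb_le_half (hv : 0 < v i) {t : ℝ} (ht : 0 ≤ t)
    (htB : t < B i) (hw : winProb B v i t t ≤ 1 / 2) (hνt : ν {t} ≠ 0) : μ {t} = 0 := by
  -- raising the bid by `ε` wins all of `ν`'s atom at `t` instead of at most half of it
  set A := ν.real {t}
  have hA : 0 < A := ENNReal.toReal_pos hνt (measure_ne_top _ _)
  set ε := min (v i * A / 4) (B i - t)
  have hε : 0 < ε := lt_min (by positivity) (by linarith)
  have hεB : ε ≤ B i - t := min_le_right _ _
  have hup : (ν.real (Iio t) + A) * v i - (t + ε) ≤ expUtil B v i μ ν := by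
    have hmass : ν.real (Iio t) + A ≤ ν.real (Iio (t + ε)) := by
      rw [← measureReal_union (by simp) (measurableSet_singleton t), Iio_union_right]
      exact measureReal_mono (Iic_subset_Iio.2 (by linarith))
    have := hμ.pureUtil_le_expUtil (x := t + ε) ⟨by linarith, by linarith⟩
    have := le_pureUtil (B := B) (ν := ν) hv.le (t + ε)
    nlinarith
  refine hμ.measure_eq_zero_of_pureUtil_lt hv.le fun x hx ↦ ?_
  rw [mem_singleton_iff.1 hx]
  have := pureUtil_le_of_winProb_le_half (ν := ν) hv.le hw
  nlinarith [min_le_left (v i * A / 4) (B i - t)]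

end IsBestResponse

theorem IsBestResponse.sInf_supp_eq_zero {j : Fin 2} {μ ν : Measure ℝ}
    (hμ : IsBestResponse B v j μ ν) (hν : IsBestResponse B v (1 - j) ν μ) (hv : ∀ i, 0 < v i)
    (h : sInf (supp μ) < sSup (supp μ)) : sInf (supp μ) = 0 := by
  have := hμ.1.1
  have := hν.1.1
  have hne := nonempty_supp_of_sInf_lt_sSup h
  set t := sInf (supp μ)
  have htμ : t ∈ supp μ := hμ.1.sInf_supp_mem hne
  have htB : t < B j := h.trans_le (csSup_le hne fun _ hx ↦ (hμ.1.supp_subset hx).2)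
  rcases (hμ.1.supp_subset htμ).1.eq_or_lt with h0 | ht
  · exact h0.symm
  exfalso
  have hlow : μ (Iio t) = 0 := measure_Iio_sInf_supp ⟨0, fun _ hx ↦ (hμ.1.supp_subset hx).1⟩
  have hloses : ∀ x, 0 < x → μ (Iic x) = 0 → pureUtil B v (1 - j) μ x < 0 :=
    fun x hx ↦ pureUtil_neg_of_measure_Iic_eq_zero (hv _).le hx
  have hgap : ν (Ioo 0 t) = 0 := hν.measure_eq_zero_of_pureUtil_neg (hv _).le fun x hx ↦
    hloses x hx.1 (measure_mono_null (Iic_subset_Iio.2 hx.2) hlow)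
  by_cases hνt : ν {t} = 0
  · exact hμ.notMem_supp_of_measure_Ioo_eq_zero (hv j) ht hlow hgap hνt htμ
  have hμt : μ {t} ≠ 0 := fun hμt ↦ hνt <| hν.measure_eq_zero_of_pureUtil_neg (hv _).le
    fun x hx ↦ by
      rw [mem_singleton_iff.1 hx]
      exact hloses t ht (by rw [← Iio_union_right]; exact measure_union_null hlow hμt)
  rcases winProb_self_le_half_or (B := B) (v := v) (i := j) t with hw | hw
  · exact hμt (hμ.measure_singleton_eq_zero_of_winProb_le_half (hv j) ht.le htB hw hνt)
  · refine hνt (hν.measure_eq_zero_of_pureUtil_neg (hv _).le fun x hx ↦ ?_)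
    rw [mem_singleton_iff.1 hx, pureUtil_eq, hw, (measureReal_eq_zero_iff).2 hlow]
    linarith

theorem both_randomize_inf_zero_general (B v : Fin 2 → ℝ)
    (hv : ∀ i, 0 < v i) (F : Fin 2 → Measure ℝ) (hN : IsNash B v F)
    (h1 : sInf (supp (F 0)) < sSup (supp (F 0)))
    (h2 : sInf (supp (F 1)) < sSup (supp (F 1))) :
    sInf (supp (F 0)) = 0 ∧ sInf (supp (F 1)) = 0 :=
  ⟨(hN.isBestResponse 0).sInf_supp_eq_zero (hN.isBestResponse 1) hv h1,
    (hN.isBestResponse 1).sInf_supp_eq_zero (hN.isBestResponse 0) hv h2⟩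

/-- In a Nash equilibrium, if both players' strategy supports have their infimum
strictly below their supremum, then both infima equal `0`. -/
theorem both_randomize_inf_zero (B v : Fin 2 → ℝ) (hB : ∀ i, 0 ≤ B i)
    (hv : ∀ i, 0 < v i) (F : Fin 2 → Measure ℝ) (hN : IsNash B v F)
    (h1 : sInf (supp (F 0)) < sSup (supp (F 0)))
    (h2 : sInf (supp (F 1)) < sSup (supp (F 1))) :
    sInf (supp (F 0)) = 0 ∧ sInf (supp (F 1)) = 0 :=
  both_randomize_inf_zero_general B v hv F hN h1 h2
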